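/- Stallings' group S, i.e., the presented group ⟨a,b,c,d,s | [a,c], [a,d], [b,c], [b,d], (a⁻¹sa)(b⁻¹sb)⁻¹, (a⁻¹sa)(c⁻¹sc)⁻¹, (a⁻¹sa)(d⁻¹sd)⁻¹⟩, is isomorphic to B₃, the kernel of the homomorphism F₂ × F₂ × F₂ → ℤ sending each of the six free generators to 1. -/

import Mathlib

/-- `F₂`, the free group on two generators. -/
abbrev F2 : Type := FreeGroup (Fin 2)

/-- The free group on the five generators `a, b, c, d, s`. -/
abbrev F5 : Type := FreeGroup (Fin 5)

open scoped commutatorElement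

/-- Relators of Stallings' group: `[a,c], [a,d], [b,c], [b,d]`,
`(a⁻¹sa)(b⁻¹sb)⁻¹, (a⁻¹sa)(c⁻¹sc)⁻¹, (a⁻¹sa)(d⁻¹sd)⁻¹`, where `a, b, c, d, s` are the
generators `0, 1, 2, 3, 4` respectively. -/
def stallingsRels : Set F5 :=
  {⁅FreeGroup.of (0 : Fin 5), FreeGroup.of 2⁆, ⁅FreeGroup.of (0 : Fin 5), FreeGroup.of 3⁆,
    ⁅FreeGroup.of (1 : Fin 5), FreeGroup.of 2⁆, ⁅FreeGroup.of (1 : Fin 5), FreeGroup.of 3⁆,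
    ((FreeGroup.of 0)⁻¹ * FreeGroup.of 4 * FreeGroup.of 0) *
      ((FreeGroup.of 1)⁻¹ * FreeGroup.of 4 * FreeGroup.of 1)⁻¹,
    ((FreeGroup.of 0)⁻¹ * FreeGroup.of 4 * FreeGroup.of 0) *
      ((FreeGroup.of 2)⁻¹ * FreeGroup.of 4 * FreeGroup.of 2)⁻¹,
    ((FreeGroup.of 0)⁻¹ * FreeGroup.of 4 * FreeGroup.of 0) *
      ((FreeGroup.of 3)⁻¹ * FreeGroup.of 4 * FreeGroup.of 3)⁻¹}

/-!
The assignment `a ↦ (x₀, y₀⁻¹, 1)`, `b ↦ (x₁, y₀⁻¹, 1)`, `c ↦ (1, y₀⁻¹, z₀)`, `d ↦ (1, y₀⁻¹, z₁)`,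
`s ↦ (1, y₁y₀⁻¹, 1)` (with `xᵢ, yᵢ, zᵢ` the free generators of the three factors) respects the
relations of `S`, and conjugation by `t = (1, y₀, 1)` acts on the image as the automorphism `σ` of
`S` fixing `a, b, c, d` and sending `s ↦ a⁻¹sa`. This gives `S ⋊_σ ℤ → F₂ × F₂ × F₂`, with the
generator of `ℤ` going to `t`. Conversely, sending the generators `x₀, x₁, y₀, y₁, z₀, z₁` to
`a·t, b·t, t, s·t, c·t, d·t` in `S ⋊_σ ℤ` defines a homomorphism on `F₂ × F₂ × F₂`: the relations of
`S` are exactly what makes the images of different factors commute. The two maps are mutually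
inverse, and under this isomorphism `ψ` becomes the projection `S ⋊_σ ℤ → ℤ`, whose kernel is `S`.
-/

section GroupLemmas

variable {G : Type*} [Group G]

theorem Commute.conj_conj_eq_of_conj_eq {x y s : G} (h : Commute x y)
    (hs : x⁻¹ * s * x = y⁻¹ * s * y) :
    x⁻¹ * (x⁻¹ * s * x) * x = y⁻¹ * (x⁻¹ * s * x) * y := by
  calc x⁻¹ * (x⁻¹ * s * x) * x = (y * x)⁻¹ * s * (y * x) := by rw [hs]; group
    _ = (x * y)⁻¹ * s * (x * y) := by rw [h.eq]
    _ = y⁻¹ * (x⁻¹ * s * x) * y := by group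

theorem Commute.mul_mul_inv_eq_of_conj_eq {x y s : G} (h : Commute x y)
    (hs : x⁻¹ * s * x = y⁻¹ * s * y) : x * s * x⁻¹ = y * s * y⁻¹ := by
  calc x * s * x⁻¹ = y * ((y⁻¹ * x) * s * (y⁻¹ * x)⁻¹) * y⁻¹ := by group
    _ = y * (x * (y⁻¹ * s * y) * x⁻¹) * y⁻¹ := by rw [h.symm.inv_left.eq]; group
    _ = y * s * y⁻¹ := by rw [← hs]; group

theorem FreeGroup.commute_lift_lift {α β : Type*} {f : α → G} {g : β → G}
    (h : ∀ i j, Commute (f i) (g j)) (u : FreeGroup α) (v : FreeGroup β) :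
    Commute (lift f u) (lift g v) := by
  induction u using FreeGroup.induction_on with
  | C1 => simp
  | of i =>
    induction v using FreeGroup.induction_on with
    | C1 => simp
    | of j => simpa using h i j
    | inv_of j hj => simpa using hj.inv_right
    | mul v w hv hw => simpa using hv.mul_right hw
  | inv_of i hi => simpa using hi.inv_left
  | mul u w hu hw => simpa using hu.mul_left hw

theorem MonoidHom.prod_ext {M N P : Type*} [Monoid M] [Monoid N] [Monoid P]
    {f g : M × N →* P} (hl : f.comp (inl M N) = g.comp (inl M N))
    (hr : f.comp (inr M N) = g.comp (inr M N)) : f = g := by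
  rw [← f.noncommCoprod_unique, ← g.noncommCoprod_unique]
  simp only [hl, hr]

end GroupLemmas

namespace SemidirectProduct

variable {N H : Type*} [Group N] [Group H] {φ : H →* MulAut N}

theorem commute_inl_mul_inr {n m : N} {g : H} (h : n * φ g m = m * φ g n) :
    Commute (inl n * inr g : N ⋊[φ] H) (inl m * inr g) := by
  ext <;> simp [h]

noncomputable def mulEquivKerRightHomComp {G : Type*} [Group G] (e : G ≃* N ⋊[φ] H) :
    N ≃* (rightHom.comp e.toMonoidHom).ker :=
  (MonoidHom.ofInjective inl_injective).trans <|
    (MulEquiv.subgroupCongr range_inl_eq_ker_rightHom).trans <|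
      (e.symm.subgroupMap _).trans <| MulEquiv.subgroupCongr <| by
        rw [← MonoidHom.comap_ker]; exact (Subgroup.comap_equiv_eq_map_symm e _).symm

end SemidirectProduct

theorem MonoidHom.map_zpow_apply_eq_conj {N H : Type*} [Group N] [Group H] (f : N →* H)
    {σ : MulAut N} {t : H} (h : ∀ x, f (σ x) = t * f x * t⁻¹) (n : ℤ) (x : N) :
    f ((σ ^ n) x) = t ^ n * f x * (t ^ n)⁻¹ := by
  induction n using Int.induction_on generalizing x with
  | zero => simp
  | succ k ih => rw [zpow_add_one, MulAut.mul_apply, ih, h, zpow_add_one]; group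
  | pred k ih =>
    have hinv : f (σ⁻¹ x) = t⁻¹ * f x * t := by
      have := h (σ⁻¹ x)
      rw [MulAut.apply_inv_self] at this
      rw [this]; group
    rw [zpow_sub_one, MulAut.mul_apply, ih, hinv, zpow_sub_one]; group

section StallingsTuple

variable {G : Type*} [Group G]

structure IsStallingsTuple (a b c d s : G) : Prop where
  commute_ac : Commute a c
  commute_ad : Commute a d
  commute_bc : Commute b c
  commute_bd : Commute b d
  conj_b : a⁻¹ * s * a = b⁻¹ * s * b
  conj_c : a⁻¹ * s * a = c⁻¹ * s * c
  conj_d : a⁻¹ * s * a = d⁻¹ * s * d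

theorem lift_stallingsRels_eq_one_iff {f : Fin 5 → G} :
    (∀ r ∈ stallingsRels, FreeGroup.lift f r = 1) ↔
      IsStallingsTuple (f 0) (f 1) (f 2) (f 3) (f 4) := by
  simp only [stallingsRels, Set.mem_insert_iff, Set.mem_singleton_iff, forall_eq_or_imp,
    forall_eq, map_commutatorElement, map_mul, map_inv, FreeGroup.lift_apply_of,
    commutatorElement_eq_one_iff_mul_comm, mul_inv_eq_one]
  exact ⟨fun ⟨h1, h2, h3, h4, h5, h6, h7⟩ => ⟨h1, h2, h3, h4, h5, h6, h7⟩,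
    fun ⟨h1, h2, h3, h4, h5, h6, h7⟩ => ⟨h1, h2, h3, h4, h5, h6, h7⟩⟩

namespace IsStallingsTuple

variable {a b c d s : G}

theorem conj_s (h : IsStallingsTuple a b c d s) : IsStallingsTuple a b c d (a⁻¹ * s * a) where
  __ := h
  conj_b := by
    have hbc := h.commute_bc.conj_conj_eq_of_conj_eq (h.conj_b.symm.trans h.conj_c)
    rw [← h.conj_b] at hbc
    exact (h.commute_ac.conj_conj_eq_of_conj_eq h.conj_c).trans hbc.symm
  conj_c := h.commute_ac.conj_conj_eq_of_conj_eq h.conj_c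
  conj_d := h.commute_ad.conj_conj_eq_of_conj_eq h.conj_d

theorem conj_inv_s (h : IsStallingsTuple a b c d s) :
    IsStallingsTuple a b c d (a * s * a⁻¹) where
  __ := h
  conj_b := by
    conv_rhs => rw [h.commute_ac.mul_mul_inv_eq_of_conj_eq h.conj_c,
      ← h.commute_bc.mul_mul_inv_eq_of_conj_eq (h.conj_b.symm.trans h.conj_c)]
    group
  conj_c := by
    conv_rhs => rw [h.commute_ac.mul_mul_inv_eq_of_conj_eq h.conj_c]
    group
  conj_d := by
    conv_rhs => rw [h.commute_ad.mul_mul_inv_eq_of_conj_eq h.conj_d]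
    group

end IsStallingsTuple

end StallingsTuple

abbrev StallingsGroup : Type := PresentedGroup stallingsRels

namespace StallingsGroup

open SemidirectProduct

def a : StallingsGroup := .of 0
def b : StallingsGroup := .of 1
def c : StallingsGroup := .of 2
def d : StallingsGroup := .of 3
def s : StallingsGroup := .of 4

theorem isStallingsTuple_generators : IsStallingsTuple a b c d s := by
  refine lift_stallingsRels_eq_one_iff.mp fun r hr => ?_
  have hmk : FreeGroup.lift (PresentedGroup.of (rels := stallingsRels)) = PresentedGroup.mk _ := by
    ext; rfl
  rw [hmk]
  exact (QuotientGroup.eq_one_iff _).mpr (Subgroup.subset_normalClosure hr)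

theorem hom_ext {G : Type*} [Group G] {f g : StallingsGroup →* G} (ha : f a = g a)
    (hb : f b = g b) (hc : f c = g c) (hd : f d = g d) (hs : f s = g s) : f = g := by
  ext i
  fin_cases i
  exacts [ha, hb, hc, hd, hs]

section lift

variable {G : Type*} [Group G] {a' b' c' d' s' : G}

def lift (h : IsStallingsTuple a' b' c' d' s') : StallingsGroup →* G :=
  PresentedGroup.toGroup (f := ![a', b', c', d', s']) (lift_stallingsRels_eq_one_iff.mpr h)

variable (h : IsStallingsTuple a' b' c' d' s')

@[simp] theorem lift_a : lift h a = a' := PresentedGroup.toGroup.of _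
@[simp] theorem lift_b : lift h b = b' := PresentedGroup.toGroup.of _
@[simp] theorem lift_c : lift h c = c' := PresentedGroup.toGroup.of _
@[simp] theorem lift_d : lift h d = d' := PresentedGroup.toGroup.of _
@[simp] theorem lift_s : lift h s = s' := PresentedGroup.toGroup.of _

end lift

def shift : MulAut StallingsGroup :=
  MonoidHom.toMulEquiv (lift isStallingsTuple_generators.conj_s)
    (lift isStallingsTuple_generators.conj_inv_s)
    (hom_ext rfl rfl rfl rfl (by simp; group))
    (hom_ext rfl rfl rfl rfl (by simp; group))

-- Not proved by `rfl`: as `dsimp` lemmas they could not discharge the side condition of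
-- `inr_inv_mul_twist` below.
@[simp] theorem shift_a : shift a = a :=
  lift_a isStallingsTuple_generators.conj_s
@[simp] theorem shift_b : shift b = b :=
  lift_b isStallingsTuple_generators.conj_s
@[simp] theorem shift_c : shift c = c :=
  lift_c isStallingsTuple_generators.conj_s
@[simp] theorem shift_d : shift d = d :=
  lift_d isStallingsTuple_generators.conj_s
@[simp] theorem shift_s : shift s = a⁻¹ * s * a :=
  lift_s isStallingsTuple_generators.conj_s

abbrev SemidirectInt : Type := StallingsGroup ⋊[zpowersHom _ shift] Multiplicative ℤ

def twist (n : StallingsGroup) : SemidirectInt := inl n * inr (.ofAdd 1)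

@[simp] theorem twist_one : twist 1 = inr (.ofAdd 1) := by
  simp [twist]

@[simp] theorem twist_mul_inr_inv (n : StallingsGroup) :
    twist n * (inr (.ofAdd 1))⁻¹ = inl n := by
  simp [twist]

@[simp] theorem inr_inv_mul_twist {n : StallingsGroup} (h : shift n = n) :
    (inr (.ofAdd 1))⁻¹ * twist n = inl n := by
  ext <;> simp [twist, MulEquiv.symm_apply_eq, h]

@[simp] theorem right_twist (n : StallingsGroup) : (twist n).right = .ofAdd 1 := by
  simp [twist]

theorem commute_twist {n m : StallingsGroup} (h : n * shift m = m * shift n) :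
    Commute (twist n) (twist m) :=
  commute_inl_mul_inr (by simpa using h)

def factorHom (x y : StallingsGroup) : F2 →* SemidirectInt := FreeGroup.lift ![twist x, twist y]

theorem commute_factorHom {x y x' y' : StallingsGroup} (h₁ : x * shift x' = x' * shift x)
    (h₂ : x * shift y' = y' * shift x) (h₃ : y * shift x' = x' * shift y)
    (h₄ : y * shift y' = y' * shift y) (u v : F2) :
    Commute (factorHom x y u) (factorHom x' y' v) :=
  FreeGroup.commute_lift_lift (fun i j => by
    fin_cases i <;> fin_cases j
    exacts [commute_twist h₁, commute_twist h₂, commute_twist h₃, commute_twist h₄]) u v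

theorem commute_factorHom_ab_one_s (u v : F2) :
    Commute (factorHom a b u) (factorHom 1 s v) := by
  refine commute_factorHom ?_ ?_ ?_ ?_ u v <;> simp
  · group
  · rw [isStallingsTuple_generators.conj_b]; group

theorem commute_factorHom_ab_cd (u v : F2) :
    Commute (factorHom a b u) (factorHom c d v) := by
  have h := isStallingsTuple_generators
  exact commute_factorHom h.commute_ac.eq h.commute_ad.eq h.commute_bc.eq h.commute_bd.eq u v

theorem commute_factorHom_one_s_cd (u v : F2) :
    Commute (factorHom 1 s u) (factorHom c d v) := by
  refine commute_factorHom ?_ ?_ ?_ ?_ u v <;> simp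
  · rw [isStallingsTuple_generators.conj_c]; group
  · rw [isStallingsTuple_generators.conj_d]; group

def ofCube : F2 × F2 × F2 →* SemidirectInt :=
  (factorHom a b).noncommCoprod ((factorHom 1 s).noncommCoprod (factorHom c d)
    commute_factorHom_one_s_cd) fun u vw =>
      (commute_factorHom_ab_one_s u vw.1).mul_right (commute_factorHom_ab_cd u vw.2)

open FreeGroup in
theorem isStallingsTuple_cube :
    IsStallingsTuple ((of 0, (of 0)⁻¹, 1) : F2 × F2 × F2) (of 1, (of 0)⁻¹, 1)
      (1, (of 0)⁻¹, of 0) (1, (of 0)⁻¹, of 1) (1, of 1 * (of 0)⁻¹, 1) := by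
  constructor <;> simp [Commute, SemiconjBy]

def toCube : StallingsGroup →* F2 × F2 × F2 := lift isStallingsTuple_cube

def cubeShift : F2 × F2 × F2 := (1, .of 0, 1)

theorem toCube_shift (x : StallingsGroup) :
    toCube (shift x) = cubeShift * toCube x * cubeShift⁻¹ := by
  suffices toCube.comp shift.toMonoidHom = (MulAut.conj cubeShift).toMonoidHom.comp toCube from
    DFunLike.congr_fun this x
  apply hom_ext <;> simp [toCube, cubeShift]

def ofSemidirect : SemidirectInt →* F2 × F2 × F2 :=
  SemidirectProduct.lift toCube (zpowersHom _ cubeShift) fun g => by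
    refine MonoidHom.ext fun x => ?_
    simpa [← map_zpow] using toCube.map_zpow_apply_eq_conj toCube_shift g.toAdd x

theorem ofSemidirect_comp_ofCube : ofSemidirect.comp ofCube = .id _ := by
  refine MonoidHom.prod_ext ?_ (MonoidHom.prod_ext ?_ ?_) <;> ext i <;> fin_cases i <;>
    simp [ofSemidirect, ofCube, factorHom, twist, toCube, cubeShift]

theorem ofCube_comp_ofSemidirect : ofCube.comp ofSemidirect = .id _ := by
  refine SemidirectProduct.hom_ext (hom_ext ?_ ?_ ?_ ?_ ?_) (MonoidHom.ext_mint ?_)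
  all_goals simp [ofSemidirect, ofCube, factorHom, toCube, cubeShift]

def cubeEquiv : F2 × F2 × F2 ≃* SemidirectInt :=
  ofCube.toMulEquiv ofSemidirect ofSemidirect_comp_ofCube ofCube_comp_ofSemidirect

end StallingsGroup

open StallingsGroup SemidirectProduct in
/-- Stallings' group `S` (the presented group above) is isomorphic to `B₃`, the kernel of the
homomorphism `F₂ × F₂ × F₂ → ℤ` sending each of the six free generators to `1`. -/
theorem stmt_14 (ψ : F2 × F2 × F2 →* Multiplicative ℤ)
    (h₁ : ∀ i : Fin 2, ψ (FreeGroup.of i, 1, 1) = Multiplicative.ofAdd 1)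
    (h₂ : ∀ i : Fin 2, ψ (1, FreeGroup.of i, 1) = Multiplicative.ofAdd 1)
    (h₃ : ∀ i : Fin 2, ψ (1, 1, FreeGroup.of i) = Multiplicative.ofAdd 1) :
    Nonempty (PresentedGroup stallingsRels ≃* ψ.ker) := by
  have hψ : rightHom.comp cubeEquiv.toMonoidHom = ψ := by
    simp only [Prod.mk_one_one] at h₁
    refine MonoidHom.prod_ext ?_ (MonoidHom.prod_ext ?_ ?_) <;> ext i <;> fin_cases i <;>
      simp [cubeEquiv, ofCube, factorHom, h₁, h₂, h₃]
  exact hψ ▸ ⟨mulEquivKerRightHomComp cubeEquiv⟩
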